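/- There exist 27 unit vectors x_1, …, x_27 in EuclideanSpace ℝ (Fin 6) such that ⟨x_i, x_j⟩ ≤ 1/4 for all i ≠ j. -/

import Mathlib

open scoped InnerProductSpace

/-!
Split `ℝ⁶` into three orthogonal planes and let `ω₀, ω₁, ω₂` be the vertices of an equilateral
triangle on the unit circle, so `⟪ωₐ, ω_c⟫ = -1/2` for `a ≠ c`. For `t, a, b ∈ ℤ/3` put `ωₐ` in
plane `t + 1` and `-ω_b` in plane `t + 2`, and scale by `1/√2`. Two such points of the same
pattern `t` have inner product `(⟪ωₐ, ω_c⟫ + ⟪ω_b, ω_e⟫)/2 ≤ (1 - 1/2)/2`; points of different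
patterns share exactly one plane, with opposite signs there, so their inner product is
`-⟪ω, ω'⟫/2 ≤ 1/4`.
-/

def IsSphericalCode {ι E : Type*} [NormedAddCommGroup E] [InnerProductSpace ℝ E]
    (x : ι → E) (r : ℝ) : Prop :=
  (∀ i, ‖x i‖ = 1) ∧ Pairwise fun i j => ⟪x i, x j⟫_ℝ ≤ r

namespace IsSphericalCode

variable {ι κ E F : Type*} [NormedAddCommGroup E] [InnerProductSpace ℝ E]
  [NormedAddCommGroup F] [InnerProductSpace ℝ F] {x : ι → E} {r : ℝ}

theorem comp_linearIsometry (h : IsSphericalCode x r) (f : E →ₗᵢ[ℝ] F) :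
    IsSphericalCode (f ∘ x) r :=
  ⟨fun i => by simpa using h.1 i, fun _ _ hij => by simpa using h.2 hij⟩

theorem comp_injective (h : IsSphericalCode x r) {e : κ → ι} (he : Function.Injective e) :
    IsSphericalCode (x ∘ e) r :=
  ⟨fun i => h.1 (e i), fun _ _ hij => h.2 (he.ne hij)⟩

end IsSphericalCode

theorem PiLp.inner_single_single {ι V : Type*} [Fintype ι] [DecidableEq ι]
    [NormedAddCommGroup V] [InnerProductSpace ℝ V] (i j : ι) (u v : V) :
    ⟪PiLp.single 2 (β := fun _ => V) i u, PiLp.single 2 j v⟫_ℝ =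
      if i = j then ⟪u, v⟫_ℝ else 0 := by
  rw [PiLp.inner_apply, Finset.sum_eq_single i (fun k _ hk => by simp [hk]) (by simp)]
  split_ifs with h <;> simp [h]

section TriangleCode

variable {V : Type*} [NormedAddCommGroup V] [InnerProductSpace ℝ V]

noncomputable def triangleCode (u : Fin 3 → V) (p : Fin 3 × Fin 3 × Fin 3) :
    PiLp 2 (fun _ : Fin 3 => V) :=
  (√2)⁻¹ • (PiLp.single 2 (p.1 + 1) (u p.2.1) - PiLp.single 2 (p.1 + 2) (u p.2.2))

theorem two_mul_inner_triangleCode (u : Fin 3 → V) (t a b t' c e : Fin 3) :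
    2 * ⟪triangleCode u (t, a, b), triangleCode u (t', c, e)⟫_ℝ =
      (if t + 1 = t' + 1 then ⟪u a, u c⟫_ℝ else 0) - (if t + 1 = t' + 2 then ⟪u a, u e⟫_ℝ else 0)
        - (if t + 2 = t' + 1 then ⟪u b, u c⟫_ℝ else 0)
        + (if t + 2 = t' + 2 then ⟪u b, u e⟫_ℝ else 0) := by
  have h2 : (√2)⁻¹ * (√2)⁻¹ = 2⁻¹ := by rw [← mul_inv, Real.mul_self_sqrt zero_le_two]
  rw [triangleCode, triangleCode, real_inner_smul_left, real_inner_smul_right,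
    ← mul_assoc (√2)⁻¹, h2]
  simp only [inner_sub_left, inner_sub_right, PiLp.inner_single_single]
  ring

variable {u : Fin 3 → V} (hu : ∀ a b, ⟪u a, u b⟫_ℝ = if a = b then 1 else -1 / 2)
include hu

theorem norm_triangleCode (p : Fin 3 × Fin 3 × Fin 3) : ‖triangleCode u p‖ = 1 := by
  obtain ⟨t, a, b⟩ := p
  have h := two_mul_inner_triangleCode u t a b t a b
  have hne : t + 1 ≠ t + 2 := by simp
  simp only [if_true, if_neg hne, if_neg hne.symm, hu, real_inner_self_eq_norm_sq] at h
  have h1 : ‖triangleCode u (t, a, b)‖ ^ 2 = 1 := by linarith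
  exact (pow_eq_one_iff_of_nonneg (norm_nonneg _) two_ne_zero).1 h1

theorem inner_triangleCode_le {p q : Fin 3 × Fin 3 × Fin 3} (hpq : p ≠ q) :
    ⟪triangleCode u p, triangleCode u q⟫_ℝ ≤ 1 / 4 := by
  obtain ⟨t, a, b⟩ := p
  obtain ⟨t', c, e⟩ := q
  have h := two_mul_inner_triangleCode u t a b t' c e
  rcases eq_or_ne t t' with rfl | ht
  · have hne : t + 1 ≠ t + 2 := by simp
    simp only [if_true, if_neg hne, if_neg hne.symm] at h
    have hac : a ≠ c ∨ b ≠ e := by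
      by_contra! hac
      exact hpq (by rw [hac.1, hac.2])
    have hup : ∀ a b, ⟪u a, u b⟫_ℝ ≤ 1 := fun a b => by rw [hu]; split_ifs <;> norm_num
    rcases hac with hac | hbe
    · rw [hu a c, if_neg hac] at h
      linarith [hup b e]
    · rw [hu b e, if_neg hbe] at h
      linarith [hup a c]
  · have hlow : ∀ a b, -1 / 2 ≤ ⟪u a, u b⟫_ℝ := fun a b => by rw [hu]; split_ifs <;> norm_num
    have h11 : t + 1 ≠ t' + 1 := by simpa using ht
    have h22 : t + 2 ≠ t' + 2 := by simpa using ht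
    have h12 : ∀ t t' : Fin 3, ¬(t + 1 = t' + 2 ∧ t + 2 = t' + 1) := by decide
    simp only [if_neg h11, if_neg h22] at h
    split_ifs at h with h1 h2
    · exact absurd ⟨h1, h2⟩ (h12 t t')
    all_goals linarith [hlow a e, hlow b c]

theorem isSphericalCode_triangleCode : IsSphericalCode (triangleCode u) (1 / 4) :=
  ⟨norm_triangleCode hu, fun _ _ => inner_triangleCode_le hu⟩

end TriangleCode

noncomputable def equilateralTriangle : Fin 3 → EuclideanSpace ℝ (Fin 2) :=
  ![!₂[1, 0], !₂[-1 / 2, √3 / 2], !₂[-1 / 2, -√3 / 2]]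

theorem inner_equilateralTriangle (a b : Fin 3) :
    ⟪equilateralTriangle a, equilateralTriangle b⟫_ℝ = if a = b then 1 else -1 / 2 := by
  rw [PiLp.inner_apply, Fin.sum_univ_two]
  fin_cases a <;> fin_cases b <;> norm_num [equilateralTriangle] <;> ring_nf <;> norm_num

/-- There exist 27 unit vectors in `EuclideanSpace ℝ (Fin 6)` whose pairwise
inner products are all at most the stated bound. -/
theorem exists_spherical_code_27_points_dim6 :
    ∃ x : Fin 27 → EuclideanSpace ℝ (Fin 6),
      (∀ i, ‖x i‖ = 1) ∧ ∀ i j, i ≠ j → ⟪x i, x j⟫_ℝ ≤ 1 / 4 := by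
  have hdim : Module.finrank ℝ (PiLp 2 fun _ : Fin 3 => EuclideanSpace ℝ (Fin 2)) = 6 := by
    rw [(WithLp.linearEquiv 2 ℝ _).finrank_eq, Module.finrank_pi_fintype]
    simp
  let f := ((stdOrthonormalBasis ℝ _).reindex (finCongr hdim)).repr
  let e : Fin 27 ≃ Fin 3 × Fin 3 × Fin 3 := (Fintype.equivFinOfCardEq (by simp)).symm
  obtain ⟨hnorm, hinner⟩ :=
    ((isSphericalCode_triangleCode inner_equilateralTriangle).comp_injective
      e.injective).comp_linearIsometry f.toLinearIsometry
  exact ⟨_, hnorm, hinner⟩
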